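/- arXiv:2210.08580 — 2 statements merged into one kernel-verified Lean document; each statement's English description precedes it below -/
import Mathlib

section
/- Let Σ be a real N×N_s matrix, let M := Σᵀ Σ have eigendecomposition M = W S Wᵀ with W orthogonal and S diagonal with nonnegative entries, let G satisfy the four Penrose equations for M, and set P^Σ := Σ G Σᵀ. For 0 ≤ n ≤ N_s, let P_n^Σ := Σ M⁺_n Σᵀ, where M⁺_n := W S⁺_n Wᵀ with [S⁺_n]_{ii} = 1/[S]_{ii} if i > N_s − n and [S]_{ii} ≠ 0, and [S⁺_n]_{ii} = 0 otherwise. Then P^Σ P_n^Σ = P_n^Σ P^Σ = P_n^Σ; that is, the filtered projector is dominated by the full quasi-Helmholtz projector. -/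
/-!
Write `M = Σᵀ Σ`. Transposing `M G M = M`, using that `M`, `G M` and `M G` are symmetric, gives
`G M M = M = M M G`, so `Σ G Σᵀ` fixes `Σ X Σᵀ` on the left whenever `X = M Y`, and on the
right whenever `X = Y M`. The filtered pseudoinverse `W S⁺ₙ Wᵀ` has both forms, because its
spectral weights vanish wherever those of `M` do.
-/

open Matrix

namespace Matrix

section Penrose

variable {m n R : Type*} [Fintype m] [CommRing R]

theorem isSymm_transpose_mul_self' (S : Matrix m n R) : (Sᵀ * S).IsSymm := by
  rw [IsSymm, transpose_mul, transpose_transpose]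

variable [Fintype n]

theorem IsSymm.mul_mul_self_of_penrose {A G : Matrix n n R} (hA : A.IsSymm)
    (h1 : A * G * A = A) (h4 : (G * A)ᵀ = G * A) : G * A * A = A := by
  calc G * A * A = (G * A)ᵀ * Aᵀ := by rw [h4, hA.eq]
    _ = (A * (G * A))ᵀ := (transpose_mul _ _).symm
    _ = A := by rw [← mul_assoc, h1, hA.eq]

theorem IsSymm.self_mul_mul_of_penrose {A G : Matrix n n R} (hA : A.IsSymm)
    (h1 : A * G * A = A) (h3 : (A * G)ᵀ = A * G) : A * A * G = A := by
  calc A * A * G = Aᵀ * (A * G)ᵀ := by rw [h3, hA.eq, mul_assoc]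
    _ = (A * G * A)ᵀ := (transpose_mul _ _).symm
    _ = A := by rw [h1, hA.eq]

variable {S : Matrix m n R} {G X Y : Matrix n n R}

theorem penrose_sandwich_mul_of_eq_gram_mul
    (h1 : (Sᵀ * S) * G * (Sᵀ * S) = Sᵀ * S) (h4 : (G * (Sᵀ * S))ᵀ = G * (Sᵀ * S))
    (hX : X = (Sᵀ * S) * Y) : (S * G * Sᵀ) * (S * X * Sᵀ) = S * X * Sᵀ := by
  have hGMX : G * (Sᵀ * S) * X = X := by
    rw [hX, ← mul_assoc, (isSymm_transpose_mul_self' S).mul_mul_self_of_penrose h1 h4]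
  calc (S * G * Sᵀ) * (S * X * Sᵀ) = S * (G * (Sᵀ * S) * X) * Sᵀ := by
        simp only [Matrix.mul_assoc]
    _ = S * X * Sᵀ := by rw [hGMX]

theorem mul_penrose_sandwich_of_eq_mul_gram
    (h1 : (Sᵀ * S) * G * (Sᵀ * S) = Sᵀ * S) (h3 : ((Sᵀ * S) * G)ᵀ = (Sᵀ * S) * G)
    (hX : X = Y * (Sᵀ * S)) : (S * X * Sᵀ) * (S * G * Sᵀ) = S * X * Sᵀ := by
  have hXMG : X * ((Sᵀ * S) * G) = X := by
    rw [hX, mul_assoc, ← mul_assoc (Sᵀ * S),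
      (isSymm_transpose_mul_self' S).self_mul_mul_of_penrose h1 h3]
  calc (S * X * Sᵀ) * (S * G * Sᵀ) = S * (X * ((Sᵀ * S) * G)) * Sᵀ := by
        simp only [Matrix.mul_assoc]
    _ = S * X * Sᵀ := by rw [hXMG]

end Penrose

section Spectral

variable {n : Type*} [Fintype n] [DecidableEq n]

theorem orthogonal_conj_diagonal_mul {R : Type*} [Semiring R] {W : Matrix n n R}
    (hW : Wᵀ * W = 1) (d e : n → R) :
    (W * diagonal d * Wᵀ) * (W * diagonal e * Wᵀ) = W * diagonal (d * e) * Wᵀ := by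
  calc (W * diagonal d * Wᵀ) * (W * diagonal e * Wᵀ)
      = W * diagonal d * (Wᵀ * W) * diagonal e * Wᵀ := by simp only [Matrix.mul_assoc]
    _ = W * diagonal (d * e) * Wᵀ := by
        rw [hW, mul_one, mul_assoc W, diagonal_mul_diagonal]; rfl

variable {K : Type*} [Field K] {W : Matrix n n K} {d e : n → K}

theorem orthogonal_conj_diagonal_eq_mul_of_support_subset (hW : Wᵀ * W = 1)
    (hde : ∀ i, d i = 0 → e i = 0) :
    W * diagonal e * Wᵀ = (W * diagonal d * Wᵀ) * (W * diagonal (e / d) * Wᵀ) := by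
  rw [orthogonal_conj_diagonal_mul hW]
  congr 3
  funext i
  by_cases hd : d i = 0
  · simp [hde i hd]
  · simp [mul_div_cancel₀ _ hd]

theorem orthogonal_conj_diagonal_eq_mul_of_support_subset' (hW : Wᵀ * W = 1)
    (hde : ∀ i, d i = 0 → e i = 0) :
    W * diagonal e * Wᵀ = (W * diagonal (e / d) * Wᵀ) * (W * diagonal d * Wᵀ) := by
  rw [orthogonal_conj_diagonal_mul hW, mul_comm (e / d) d, ← orthogonal_conj_diagonal_mul hW]
  exact orthogonal_conj_diagonal_eq_mul_of_support_subset hW hde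

end Spectral

end Matrix

theorem filtered_projector_dominated_by_full_projector_general
    (N Ns : ℕ) (Sg : Matrix (Fin N) (Fin Ns) ℝ)
    (W : Matrix (Fin Ns) (Fin Ns) ℝ) (s : Fin Ns → ℝ)
    (hW : Wᵀ * W = 1)
    (hM : Sgᵀ * Sg = W * Matrix.diagonal s * Wᵀ)
    (G : Matrix (Fin Ns) (Fin Ns) ℝ)
    (h1 : (Sgᵀ * Sg) * G * (Sgᵀ * Sg) = Sgᵀ * Sg)
    (h3 : ((Sgᵀ * Sg) * G)ᵀ = (Sgᵀ * Sg) * G)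
    (h4 : (G * (Sgᵀ * Sg))ᵀ = G * (Sgᵀ * Sg))
    (P : Matrix (Fin N) (Fin N) ℝ)
    (hP : P = Sg * G * Sgᵀ)
    (n : ℕ)
    (Mpn : Matrix (Fin Ns) (Fin Ns) ℝ)
    (hMpn : Mpn = W * Matrix.diagonal
      (fun i : Fin Ns => if Ns - n ≤ (i : ℕ) ∧ s i ≠ 0 then (s i)⁻¹ else 0) * Wᵀ)
    (Pn : Matrix (Fin N) (Fin N) ℝ)
    (hPn : Pn = Sg * Mpn * Sgᵀ) :
    P * Pn = Pn ∧ Pn * P = Pn := by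
  have hsupp : ∀ i, s i = 0 →
      (if Ns - n ≤ (i : ℕ) ∧ s i ≠ 0 then (s i)⁻¹ else 0) = 0 := fun i hi => by simp [hi]
  have hMpn_left := orthogonal_conj_diagonal_eq_mul_of_support_subset hW hsupp
  have hMpn_right := orthogonal_conj_diagonal_eq_mul_of_support_subset' hW hsupp
  rw [← hMpn, ← hM] at hMpn_left hMpn_right
  subst hP hPn
  exact ⟨penrose_sandwich_mul_of_eq_gram_mul h1 h4 hMpn_left,
    mul_penrose_sandwich_of_eq_mul_gram h1 h3 hMpn_right⟩

/-- The filtered quasi-Helmholtz projector is dominated by the full one: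
`P^Σ P_n^Σ = P_n^Σ P^Σ = P_n^Σ`. -/
theorem filtered_projector_dominated_by_full_projector
    (N Ns : ℕ) (Sg : Matrix (Fin N) (Fin Ns) ℝ)
    (W : Matrix (Fin Ns) (Fin Ns) ℝ) (s : Fin Ns → ℝ)
    (hW : Wᵀ * W = 1) (hs : ∀ i, 0 ≤ s i)
    (hM : Sgᵀ * Sg = W * Matrix.diagonal s * Wᵀ)
    (G : Matrix (Fin Ns) (Fin Ns) ℝ)
    (h1 : (Sgᵀ * Sg) * G * (Sgᵀ * Sg) = Sgᵀ * Sg)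
    (h2 : G * (Sgᵀ * Sg) * G = G)
    (h3 : ((Sgᵀ * Sg) * G)ᵀ = (Sgᵀ * Sg) * G)
    (h4 : (G * (Sgᵀ * Sg))ᵀ = G * (Sgᵀ * Sg))
    (P : Matrix (Fin N) (Fin N) ℝ)
    (hP : P = Sg * G * Sgᵀ)
    (n : ℕ) (hn : n ≤ Ns)
    (Mpn : Matrix (Fin Ns) (Fin Ns) ℝ)
    (hMpn : Mpn = W * Matrix.diagonal
      (fun i : Fin Ns => if Ns - n ≤ (i : ℕ) ∧ s i ≠ 0 then (s i)⁻¹ else 0) * Wᵀ)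
    (Pn : Matrix (Fin N) (Fin N) ℝ)
    (hPn : Pn = Sg * Mpn * Sgᵀ) :
    P * Pn = Pn ∧ Pn * P = Pn :=
  filtered_projector_dominated_by_full_projector_general N Ns Sg W s hW hM G h1 h3 h4 P hP n Mpn
    hMpn Pn hPn
end

section
/- Let Σ be a real N×N_s matrix and Λ a real N×N_l matrix with Σᵀ Λ = 0. Let P^Σ := Σ G_Σ Σᵀ and P^Λ := Λ G_Λ Λᵀ, where G_Σ and G_Λ satisfy the four Penrose equations for Σᵀ Σ and Λᵀ Λ respectively. Let Λᵀ Λ = W S Wᵀ be an eigendecomposition with W orthogonal and S diagonal with nonnegative entries, and for 0 ≤ n ≤ N_l set P_n^Λ := Λ W S⁺_n Wᵀ Λᵀ with [S⁺_n]_{ii} = 1/[S]_{ii} if i > N_l − n and [S]_{ii} ≠ 0, and 0 otherwise. Then the filtered harmonic-loop projector P_n^{ΛH} := P_n^Λ + I − P^Σ − P^Λ is symmetric and idempotent (i.e., an orthogonal projector). -/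
/-!
If `G` is an inner (generalized) inverse of the Gram matrix `Aᴴ A`, i.e. `Aᴴ A G Aᴴ A = Aᴴ A`,
then `A G Aᴴ A = A`, because `Aᴴ A X = 0` forces `A X = 0`; hence `A G Aᴴ` is an orthogonal
projector onto the column space of `A`, whichever generalized inverse is chosen. The filtered
matrix `H = W S⁺ₙ Wᵀ` is instead a self-adjoint outer inverse, `H (Λᵀ Λ) H = H`, so `Λ H Λᵀ` is
an orthogonal projector onto a subspace of the range of `P^Λ`. Finally `Σᵀ Λ = 0` makes `P^Σ`
orthogonal to both, so `1 - (P^Σ + (P^Λ - P_n^Λ))` is an orthogonal projector.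
-/

namespace Matrix

variable {m n k R : Type*} [Fintype m] [Fintype n] [Fintype k]

section StarOrderedRing

variable [Ring R] [PartialOrder R] [StarRing R] [StarOrderedRing R] [NoZeroDivisors R]

theorem mul_mul_conjTranspose_mul_self_of_inner_inverse [DecidableEq n] {A : Matrix m n R}
    {G : Matrix n n R}
    (hG : Aᴴ * A * G * (Aᴴ * A) = Aᴴ * A) : A * G * (Aᴴ * A) = A := by
  have h : Aᴴ * A * (G * (Aᴴ * A) - 1) = 0 := by
    rw [Matrix.mul_sub, Matrix.mul_one, ← Matrix.mul_assoc, hG, sub_self]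
  rw [conjTranspose_mul_self_mul_eq_zero, Matrix.mul_sub, Matrix.mul_one, sub_eq_zero] at h
  rwa [Matrix.mul_assoc]

theorem mul_mul_conjTranspose_mul_of_inner_inverse [DecidableEq n] {A : Matrix m n R}
    {G : Matrix n n R} (hG : Aᴴ * A * G * (Aᴴ * A) = Aᴴ * A) (H : Matrix n n R) :
    A * G * Aᴴ * (A * H * Aᴴ) = A * H * Aᴴ := by
  calc A * G * Aᴴ * (A * H * Aᴴ) = A * G * (Aᴴ * A) * H * Aᴴ := by
        simp only [Matrix.mul_assoc]
    _ = A * H * Aᴴ := by rw [mul_mul_conjTranspose_mul_self_of_inner_inverse hG]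

theorem isStarProjection_mul_mul_conjTranspose_of_inner_inverse [DecidableEq n]
    {A : Matrix m n R} {G : Matrix n n R} (hG : Aᴴ * A * G * (Aᴴ * A) = Aᴴ * A) :
    IsStarProjection (A * G * Aᴴ) := by
  have hA := mul_mul_conjTranspose_mul_self_of_inner_inverse hG
  refine ⟨mul_mul_conjTranspose_mul_of_inner_inverse hG G, ?_⟩
  calc star (A * G * Aᴴ) = A * Gᴴ * Aᴴ := by
        simp only [star_eq_conjTranspose, conjTranspose_mul, conjTranspose_conjTranspose,
          Matrix.mul_assoc]
    _ = A * G * (Aᴴ * A) * Gᴴ * Aᴴ := by rw [hA]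
    _ = A * G * (A * G * (Aᴴ * A))ᴴ := by
        simp only [conjTranspose_mul, conjTranspose_conjTranspose, Matrix.mul_assoc]
    _ = A * G * Aᴴ := by rw [hA]

end StarOrderedRing

section Semiring

variable [Semiring R] [StarRing R]

theorem isStarProjection_mul_mul_conjTranspose_of_outer_inverse {A : Matrix m n R}
    {H : Matrix n n R} (hH : H * (Aᴴ * A) * H = H) (hHerm : H.IsHermitian) :
    IsStarProjection (A * H * Aᴴ) := by
  refine ⟨?_, (isHermitian_mul_mul_conjTranspose A hHerm).isSelfAdjoint⟩
  calc A * H * Aᴴ * (A * H * Aᴴ) = A * (H * (Aᴴ * A) * H) * Aᴴ := by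
        simp only [Matrix.mul_assoc]
    _ = A * H * Aᴴ := by rw [hH]

theorem mul_mul_conjTranspose_mul_eq_zero {B : Matrix m k R} {A : Matrix m n R}
    (hBA : Bᴴ * A = 0) (X : Matrix k k R) (Y : Matrix n n R) :
    B * X * Bᴴ * (A * Y * Aᴴ) = 0 := by
  simp only [Matrix.mul_assoc, ← Matrix.mul_assoc Bᴴ A, hBA, Matrix.zero_mul, Matrix.mul_zero]

theorem mul_diagonal_mul_conjTranspose_outer_inverse [DecidableEq n] {W : Matrix n n R}
    (hW : Wᴴ * W = 1) {f s : n → R} (hfsf : ∀ i, f i * s i * f i = f i) :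
    W * diagonal f * Wᴴ * (W * diagonal s * Wᴴ) * (W * diagonal f * Wᴴ) = W * diagonal f * Wᴴ := by
  calc W * diagonal f * Wᴴ * (W * diagonal s * Wᴴ) * (W * diagonal f * Wᴴ)
      = W * (diagonal f * (Wᴴ * W) * diagonal s * (Wᴴ * W) * diagonal f) * Wᴴ := by
        simp only [Matrix.mul_assoc]
    _ = W * diagonal f * Wᴴ := by
        rw [hW, Matrix.mul_one, Matrix.mul_one, diagonal_mul_diagonal, diagonal_mul_diagonal]
        simp only [hfsf]

end Semiring

end Matrix

open Matrix

theorem filtered_harmonic_loop_projector_is_orthogonal_projector_general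
    (N Ns Nl : ℕ) (Sg : Matrix (Fin N) (Fin Ns) ℝ) (Lm : Matrix (Fin N) (Fin Nl) ℝ)
    (horth : Sgᵀ * Lm = 0)
    (GSg : Matrix (Fin Ns) (Fin Ns) ℝ)
    (hS1 : (Sgᵀ * Sg) * GSg * (Sgᵀ * Sg) = Sgᵀ * Sg)
    (GLm : Matrix (Fin Nl) (Fin Nl) ℝ)
    (hL1 : (Lmᵀ * Lm) * GLm * (Lmᵀ * Lm) = Lmᵀ * Lm)
    (PS PL : Matrix (Fin N) (Fin N) ℝ)
    (hPS : PS = Sg * GSg * Sgᵀ)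
    (hPL : PL = Lm * GLm * Lmᵀ)
    (W : Matrix (Fin Nl) (Fin Nl) ℝ) (s : Fin Nl → ℝ)
    (hW : Wᵀ * W = 1)
    (hM : Lmᵀ * Lm = W * Matrix.diagonal s * Wᵀ)
    (n : ℕ)
    (PLn : Matrix (Fin N) (Fin N) ℝ)
    (hPLn : PLn = Lm * (W * Matrix.diagonal
      (fun i : Fin Nl => if Nl - n ≤ (i : ℕ) ∧ s i ≠ 0 then (s i)⁻¹ else 0) * Wᵀ) * Lmᵀ)
    (PLH : Matrix (Fin N) (Fin N) ℝ)
    (hPLH : PLH = PLn + 1 - PS - PL) :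
    PLHᵀ = PLH ∧ PLH * PLH = PLH := by
  simp only [← conjTranspose_eq_transpose_of_trivial] at *
  set H :=
    W * diagonal (fun i : Fin Nl => if Nl - n ≤ (i : ℕ) ∧ s i ≠ 0 then (s i)⁻¹ else 0) * Wᴴ
  have hH : H * (Lmᴴ * Lm) * H = H := by
    rw [hM]
    refine mul_diagonal_mul_conjTranspose_outer_inverse hW fun i => ?_
    split_ifs with hi
    · field_simp [hi.2]
    · simp
  have hHerm : H.IsHermitian := isHermitian_mul_mul_conjTranspose W (isHermitian_diagonal _)
  have projPS := hPS ▸ isStarProjection_mul_mul_conjTranspose_of_inner_inverse hS1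
  have projPL := hPL ▸ isStarProjection_mul_mul_conjTranspose_of_inner_inverse hL1
  have projPLn := hPLn ▸ isStarProjection_mul_mul_conjTranspose_of_outer_inverse hH hHerm
  have hPLPLn : PL * PLn = PLn := hPL ▸ hPLn ▸ mul_mul_conjTranspose_mul_of_inner_inverse hL1 H
  have hPS_PL : PS * PL = 0 := hPS ▸ hPL ▸ mul_mul_conjTranspose_mul_eq_zero horth GSg GLm
  have hPS_PLn : PS * PLn = 0 := hPS ▸ hPLn ▸ mul_mul_conjTranspose_mul_eq_zero horth GSg H
  have projPLH : IsStarProjection PLH := by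
    have projDiff := projPLn.sub_of_mul_eq_right projPL hPLPLn
    have projSum := projPS.add projDiff (by rw [Matrix.mul_sub, hPS_PL, hPS_PLn, sub_zero])
    rw [show PLH = 1 - (PS + (PL - PLn)) by rw [hPLH]; abel]
    exact projSum.one_sub
  exact ⟨projPLH.isSelfAdjoint.star_eq, projPLH.isIdempotentElem.eq⟩

/-- The filtered harmonic-loop projector `P_n^{ΛH} := P_n^Λ + I − P^Σ − P^Λ`
is symmetric and idempotent (an orthogonal projector). -/
theorem filtered_harmonic_loop_projector_is_orthogonal_projector
    (N Ns Nl : ℕ) (Sg : Matrix (Fin N) (Fin Ns) ℝ) (Lm : Matrix (Fin N) (Fin Nl) ℝ)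
    (horth : Sgᵀ * Lm = 0)
    (GSg : Matrix (Fin Ns) (Fin Ns) ℝ)
    (hS1 : (Sgᵀ * Sg) * GSg * (Sgᵀ * Sg) = Sgᵀ * Sg)
    (hS2 : GSg * (Sgᵀ * Sg) * GSg = GSg)
    (hS3 : ((Sgᵀ * Sg) * GSg)ᵀ = (Sgᵀ * Sg) * GSg)
    (hS4 : (GSg * (Sgᵀ * Sg))ᵀ = GSg * (Sgᵀ * Sg))
    (GLm : Matrix (Fin Nl) (Fin Nl) ℝ)
    (hL1 : (Lmᵀ * Lm) * GLm * (Lmᵀ * Lm) = Lmᵀ * Lm)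
    (hL2 : GLm * (Lmᵀ * Lm) * GLm = GLm)
    (hL3 : ((Lmᵀ * Lm) * GLm)ᵀ = (Lmᵀ * Lm) * GLm)
    (hL4 : (GLm * (Lmᵀ * Lm))ᵀ = GLm * (Lmᵀ * Lm))
    (PS PL : Matrix (Fin N) (Fin N) ℝ)
    (hPS : PS = Sg * GSg * Sgᵀ)
    (hPL : PL = Lm * GLm * Lmᵀ)
    (W : Matrix (Fin Nl) (Fin Nl) ℝ) (s : Fin Nl → ℝ)
    (hW : Wᵀ * W = 1) (hs : ∀ i, 0 ≤ s i)
    (hM : Lmᵀ * Lm = W * Matrix.diagonal s * Wᵀ)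
    (n : ℕ) (hn : n ≤ Nl)
    (PLn : Matrix (Fin N) (Fin N) ℝ)
    (hPLn : PLn = Lm * (W * Matrix.diagonal
      (fun i : Fin Nl => if Nl - n ≤ (i : ℕ) ∧ s i ≠ 0 then (s i)⁻¹ else 0) * Wᵀ) * Lmᵀ)
    (PLH : Matrix (Fin N) (Fin N) ℝ)
    (hPLH : PLH = PLn + 1 - PS - PL) :
    PLHᵀ = PLH ∧ PLH * PLH = PLH :=
  filtered_harmonic_loop_projector_is_orthogonal_projector_general N Ns Nl Sg Lm horth GSg hS1 GLm
    hL1 PS PL hPS hPL W s hW hM n PLn hPLn PLH hPLH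
end
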